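/- Let f : [0,∞) → (0,∞) be a function such that sup_{r∈[0,∞)} r^n f(r) < ∞ for every n ∈ ℕ₀. Then there exist a function ζ ∈ 𝒮 and a constant c > 0 such that c·f(r) ≤ ζ(r) for all r ∈ [0,∞). (Lemma B.1(b).) -/

import Mathlib

/-- The set `𝒮` of weight functions: positive, bounded, non-increasing, log-superadditive
functions on `[0,∞)` decaying faster than any inverse power. -/
def InS (ζ : ℝ → ℝ) : Prop :=
  (∀ r : ℝ, 0 ≤ r → 0 < ζ r) ∧
  BddAbove (ζ '' Set.Ici (0 : ℝ)) ∧
  (∀ r s : ℝ, 0 ≤ r → r ≤ s → ζ s ≤ ζ r) ∧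
  (∀ r s : ℝ, 0 ≤ r → 0 ≤ s → ζ r * ζ s ≤ ζ (r + s)) ∧
  (∀ n : ℕ, ∃ C : ℝ, ∀ r : ℝ, 0 ≤ r → r ^ n * ζ r ≤ C)

/-!
The weight is `ζ r = ∏ₙ (1 + r / Rₙ)⁻¹` for radii `Rₙ` that at least double at each step.
Each factor is non-increasing and log-superadditive, because
`1 + (r + s) / R ≤ (1 + r / R) * (1 + s / R)`, and `r ^ n * ζ r ≤ R₀ ⋯ Rₙ₋₁`.
For `R_N ≤ r < R_{N+1}`, the factors of index `> N` contribute at most `e²` to `1 / ζ r`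
(the ratios `r / Rₙ` decay geometrically) and the first `N + 1` at most `r ^ (N + 1)`.
Choosing `R_N ≥ C_{2N+2}`, where `r ^ n * f r ≤ C_n`, forces `r ^ (N + 1) * f r ≤ 1`,
so `f ≤ e² ζ` away from `[0, R₀)`, where `f ≤ C₀` suffices.
-/

open Real Finset

lemma log_one_add_le_self {x : ℝ} (hx : 0 ≤ x) : log (1 + x) ≤ x := by
  linarith [log_le_sub_one_of_pos (x := 1 + x) (by linarith)]

/-- `logProd R r = log ∏ₙ (1 + r / R n)`, so `exp (-logProd R r)` is the weight
`∏ₙ (1 + r / R n)⁻¹`. -/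
noncomputable def logProd (R : ℕ → ℝ) (r : ℝ) : ℝ :=
  ∑' n, log (1 + r / R n)

namespace logProd

variable {R : ℕ → ℝ}

lemma log_one_add_div_nonneg (hR : ∀ n, 0 < R n) {r : ℝ} (hr : 0 ≤ r) (n : ℕ) :
    0 ≤ log (1 + r / R n) :=
  log_nonneg (by have := div_nonneg hr (hR n).le; linarith)

lemma log_one_add_div_mono (hR : ∀ n, 0 < R n) {r s : ℝ} (hr : 0 ≤ r) (hrs : r ≤ s) (n : ℕ) :
    log (1 + r / R n) ≤ log (1 + s / R n) := by
  have := hR n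
  gcongr

lemma summable (hR : ∀ n, 0 < R n) (hsum : Summable fun n => (R n)⁻¹) {r : ℝ} (hr : 0 ≤ r) :
    Summable fun n => log (1 + r / R n) :=
  (hsum.mul_left r).of_nonneg_of_le (log_one_add_div_nonneg hR hr) fun n =>
    log_one_add_le_self (div_nonneg hr (hR n).le)

lemma nonneg (hR : ∀ n, 0 < R n) {r : ℝ} (hr : 0 ≤ r) : 0 ≤ logProd R r :=
  tsum_nonneg (log_one_add_div_nonneg hR hr)

lemma mono (hR : ∀ n, 0 < R n) (hsum : Summable fun n => (R n)⁻¹) {r s : ℝ} (hr : 0 ≤ r)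
    (hrs : r ≤ s) : logProd R r ≤ logProd R s :=
  (summable hR hsum hr).tsum_le_tsum (log_one_add_div_mono hR hr hrs)
    (summable hR hsum (hr.trans hrs))

lemma add_le (hR : ∀ n, 0 < R n) (hsum : Summable fun n => (R n)⁻¹) {r s : ℝ} (hr : 0 ≤ r)
    (hs : 0 ≤ s) :
    logProd R (r + s) ≤ logProd R r + logProd R s := by
  rw [logProd, logProd, logProd, ← (summable hR hsum hr).tsum_add (summable hR hsum hs)]
  refine (summable hR hsum (add_nonneg hr hs)).tsum_le_tsum (fun n => ?_)
    ((summable hR hsum hr).add (summable hR hsum hs))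
  have := hR n
  rw [← log_mul (by positivity) (by positivity)]
  gcongr
  rw [add_div]
  nlinarith [mul_nonneg (div_nonneg hr this.le) (div_nonneg hs this.le)]

lemma pow_mul_exp_neg_le (hR : ∀ n, 0 < R n) (hsum : Summable fun n => (R n)⁻¹) {r : ℝ}
    (hr : 0 ≤ r) (n : ℕ) :
    r ^ n * exp (-logProd R r) ≤ ∏ k ∈ range n, R k := by
  have hhead : log (∏ k ∈ range n, (1 + r / R k)) ≤ logProd R r := by
    rw [log_prod fun k _ => by have := hR k; positivity]
    exact (summable hR hsum hr).sum_le_tsum _ fun k _ => log_one_add_div_nonneg hR hr k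
  have hP : 0 < ∏ k ∈ range n, (1 + r / R k) := prod_pos fun k _ => by have := hR k; positivity
  have hpow : r ^ n ≤ (∏ k ∈ range n, R k) * ∏ k ∈ range n, (1 + r / R k) := by
    rw [← prod_mul_distrib, pow_eq_prod_const]
    refine prod_le_prod (fun _ _ => hr) fun k _ => ?_
    rw [mul_one_add, mul_div_cancel₀ _ (hR k).ne']
    linarith [hR k]
  calc r ^ n * exp (-logProd R r) ≤ r ^ n * (∏ k ∈ range n, (1 + r / R k))⁻¹ := by
        gcongr
        rw [← exp_log hP, ← exp_neg]
        exact exp_le_exp.mpr (neg_le_neg hhead)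
    _ ≤ ∏ k ∈ range n, R k := by
        rwa [mul_inv_le_iff₀ hP]

theorem inS_exp_neg (hR : ∀ n, 0 < R n) (hsum : Summable fun n => (R n)⁻¹) :
    InS fun r => exp (-logProd R r) := by
  refine ⟨fun r _ => exp_pos _, ⟨1, ?_⟩, fun r s hr hrs => ?_, fun r s hr hs => ?_,
    fun n => ⟨_, fun r hr => pow_mul_exp_neg_le hR hsum hr n⟩⟩
  · rintro _ ⟨r, hr, rfl⟩
    simpa using nonneg hR hr
  · simpa using mono hR hsum hr hrs
  · rw [← exp_add]
    exact exp_le_exp.mpr (by linarith [add_le hR hsum hr hs])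

lemma tsum_nat_add_le_two (hR : ∀ n, 0 < R n) (hsum : Summable fun n => (R n)⁻¹) {N : ℕ}
    (hgrowth : ∀ n, 2 ^ n * R N ≤ R (n + N)) {r : ℝ} (hr : 0 ≤ r) (hrN : r ≤ R N) :
    ∑' n, log (1 + r / R (n + N)) ≤ 2 := by
  have hterm (n : ℕ) : log (1 + r / R (n + N)) ≤ (1 / 2) ^ n := by
    refine (log_one_add_le_self (div_nonneg hr (hR _).le)).trans ?_
    rw [div_le_iff₀ (hR _), one_div_pow, div_mul_eq_mul_div, one_mul,
      le_div_iff₀ (by positivity), mul_comm]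
    exact (mul_le_mul_of_nonneg_left hrN (by positivity)).trans (hgrowth n)
  calc ∑' n, log (1 + r / R (n + N)) ≤ ∑' n : ℕ, (1 / 2 : ℝ) ^ n :=
        ((summable_nat_add_iff N).mpr (summable hR hsum hr)).tsum_le_tsum hterm
          summable_geometric_two
    _ = 2 := tsum_geometric_two

lemma le_sum_range_add_two (hR : ∀ n, 0 < R n) (hsum : Summable fun n => (R n)⁻¹) {N : ℕ}
    (hgrowth : ∀ n, 2 ^ n * R N ≤ R (n + N)) {r : ℝ} (hr : 0 ≤ r) (hrN : r ≤ R N) :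
    logProd R r ≤ ∑ k ∈ range N, log (1 + r / R k) + 2 := by
  rw [logProd, ← (summable hR hsum hr).sum_add_tsum_nat_add N]
  linarith [tsum_nat_add_le_two hR hsum hgrowth hr hrN]

end logProd

section Doubling

variable {R : ℕ → ℝ}

lemma two_pow_mul_le_of_two_mul_le (hR : ∀ n, 2 * R n ≤ R (n + 1)) (N n : ℕ) :
    2 ^ n * R N ≤ R (n + N) := by
  induction n with
  | zero => simp
  | succ n ih =>
    rw [pow_succ', mul_assoc, Nat.add_right_comm]
    linarith [hR (n + N)]

lemma two_pow_succ_le_of_two_mul_le (hR0 : 2 ≤ R 0) (hR : ∀ n, 2 * R n ≤ R (n + 1)) (n : ℕ) :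
    2 ^ (n + 1) ≤ R n := by
  have := two_pow_mul_le_of_two_mul_le hR 0 n
  rw [pow_succ]
  exact (mul_le_mul_of_nonneg_left hR0 (by positivity)).trans this

lemma two_le_of_two_mul_le (hR0 : 2 ≤ R 0) (hR : ∀ n, 2 * R n ≤ R (n + 1)) (n : ℕ) :
    2 ≤ R n :=
  (le_self_pow₀ one_le_two n.succ_ne_zero).trans (two_pow_succ_le_of_two_mul_le hR0 hR n)

lemma summable_inv_of_two_mul_le (hR0 : 2 ≤ R 0) (hR : ∀ n, 2 * R n ≤ R (n + 1)) :
    Summable fun n => (R n)⁻¹ := by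
  refine summable_geometric_two.of_nonneg_of_le
    (fun n => inv_nonneg.mpr (by linarith [two_le_of_two_mul_le hR0 hR n])) fun n => ?_
  rw [one_div_pow, one_div]
  exact inv_anti₀ (by positivity)
    ((pow_le_pow_right₀ one_le_two n.le_succ).trans (two_pow_succ_le_of_two_mul_le hR0 hR n))

end Doubling

lemma pow_mul_le_one {m : ℕ} {a r B : ℝ} (hm : m ≠ 0) (hr : 1 ≤ r)
    (h : r ^ (2 * m) * a ≤ B) (hB : B ≤ r) : r ^ m * a ≤ 1 := by
  have hrm : 0 < r ^ m := by positivity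
  refine le_of_mul_le_mul_left ?_ hrm
  calc r ^ m * (r ^ m * a) = r ^ (2 * m) * a := by ring
    _ ≤ r := h.trans hB
    _ ≤ r ^ m * 1 := by simpa using le_self_pow₀ hr hm

theorem log_add_logProd_le {f : ℝ → ℝ} {C R : ℕ → ℝ} (hf_pos : ∀ r, 0 ≤ r → 0 < f r)
    (hC : ∀ n r, 0 ≤ r → r ^ n * f r ≤ C n) (hR0 : 2 ≤ R 0) (hR : ∀ n, 2 * R n ≤ R (n + 1))
    (hRC : ∀ n, C (2 * n + 2) ≤ R n) {r : ℝ} (hr : 0 ≤ r) :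
    log (f r) + logProd R r ≤ 2 + log (max (C 0) 1) := by
  have hRpos n : 0 < R n := by linarith [two_le_of_two_mul_le hR0 hR n]
  have hsum := summable_inv_of_two_mul_le hR0 hR
  have hsplit {N : ℕ} (hrN : r ≤ R N) : logProd R r ≤ ∑ k ∈ range N, log (1 + r / R k) + 2 :=
    logProd.le_sum_range_add_two hRpos hsum
      (fun n => two_pow_mul_le_of_two_mul_le hR N n) hr hrN
  have hK : 0 ≤ log (max (C 0) 1) := log_nonneg (le_max_right _ _)
  have hex : ∃ n, r < R n := by
    obtain ⟨n, hn⟩ := pow_unbounded_of_one_lt r one_lt_two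
    exact ⟨n, hn.trans_le ((pow_le_pow_right₀ one_le_two n.le_succ).trans
      (two_pow_succ_le_of_two_mul_le hR0 hR n))⟩
  rcases hN : Nat.find hex with _ | N
  · have hf : log (f r) ≤ log (max (C 0) 1) :=
      log_le_log (hf_pos r hr) ((show f r ≤ C 0 by simpa using hC 0 r hr).trans (le_max_left _ _))
    have := hsplit (hN ▸ Nat.find_spec hex).le
    simp only [range_zero, sum_empty, zero_add] at this
    linarith
  · have hRN : R N ≤ r := not_lt.mp (Nat.find_min hex (by omega))
    have hr2 : 2 ≤ r := (two_le_of_two_mul_le hR0 hR N).trans hRN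
    have hhead : ∑ k ∈ range (N + 1), log (1 + r / R k) ≤ (N + 1) * log r := by
      have hterm : ∀ k ∈ range (N + 1), log (1 + r / R k) ≤ log r := fun k _ => by
        have h2 := two_le_of_two_mul_le hR0 hR k
        refine log_le_log (by positivity) ?_
        have : r / R k ≤ r / 2 := div_le_div_of_nonneg_left hr two_pos h2
        linarith
      simpa using sum_le_sum hterm
    have hf : (N + 1) * log r + log (f r) ≤ 0 := by
      have hfr := hf_pos r hr
      have h := pow_mul_le_one (m := N + 1) (by omega) (by linarith) (hC _ r hr)
        ((hRC N).trans hRN)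
      have := log_nonpos (by positivity) h
      rwa [log_mul (by positivity) hfr.ne', log_pow, Nat.cast_succ] at this
    have := hsplit (hN ▸ Nat.find_spec hex).le
    linarith

noncomputable def radii (C : ℕ → ℝ) : ℕ → ℝ
  | 0 => max 2 (C 2)
  | n + 1 => max (2 * radii C n) (C (2 * n + 4))

lemma le_radii (C : ℕ → ℝ) (n : ℕ) : C (2 * n + 2) ≤ radii C n := by
  cases n <;> exact le_max_right _ _

theorem statement9 (f : ℝ → ℝ) (hf_pos : ∀ r : ℝ, 0 ≤ r → 0 < f r)
    (hf_dec : ∀ n : ℕ, ∃ C : ℝ, ∀ r : ℝ, 0 ≤ r → r ^ n * f r ≤ C) :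
    ∃ (ζ : ℝ → ℝ) (c : ℝ), InS ζ ∧ 0 < c ∧ ∀ r : ℝ, 0 ≤ r → c * f r ≤ ζ r := by
  choose C hC using hf_dec
  have hR0 : 2 ≤ radii C 0 := le_max_left _ _
  have hR (n : ℕ) : 2 * radii C n ≤ radii C (n + 1) := le_max_left _ _
  refine ⟨fun r => exp (-logProd (radii C) r), exp (-(2 + log (max (C 0) 1))),
    logProd.inS_exp_neg (fun n => by linarith [two_le_of_two_mul_le hR0 hR n])
      (summable_inv_of_two_mul_le hR0 hR), exp_pos _, fun r hr => ?_⟩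
  have hdom := log_add_logProd_le hf_pos hC hR0 hR (le_radii C) hr
  calc exp (-(2 + log (max (C 0) 1))) * f r
      = exp (log (f r) - (2 + log (max (C 0) 1))) := by
        rw [exp_sub, exp_log (hf_pos r hr), exp_neg]
        ring
    _ ≤ exp (-logProd (radii C) r) := exp_le_exp.mpr (by linarith)
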